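/- There exists a group homomorphism ϑ : Γ₁(3) → ℂˣ with ϑ([[1,0],[-3,1]]) = ϑ([[1,1],[0,1]]) = exp(πi/3); moreover ϑ⁶ is trivial and ϑ³ takes the value -1 on both generators. -/

import Mathlib

open Matrix

/-- `A = [[1,0],[-3,1]]` in `SL(2, ℤ)`. -/
def A : Matrix.SpecialLinearGroup (Fin 2) ℤ :=
  ⟨!![1, 0; -3, 1], by norm_num [Matrix.det_fin_two_of]⟩

/-- `B = [[1,1],[0,1]]` in `SL(2, ℤ)`. -/
def B : Matrix.SpecialLinearGroup (Fin 2) ℤ :=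
  ⟨!![1, 1; 0, 1], by norm_num [Matrix.det_fin_two_of]⟩

theorem A_mem_Gamma1_three : A ∈ CongruenceSubgroup.Gamma1 3 := by
  rw [CongruenceSubgroup.Gamma1_mem]; refine ⟨?_, ?_, ?_⟩ <;> decide

theorem B_mem_Gamma1_three : B ∈ CongruenceSubgroup.Gamma1 3 := by
  rw [CongruenceSubgroup.Gamma1_mem]; refine ⟨?_, ?_, ?_⟩ <;> decide

/-!
`ϑ` is the product of an order-2 and an order-3 character. The order-2 one is the sign of the
permutation that `g mod 2 ∈ SL(2, 𝔽₂) ≅ S₃` induces on `𝔽₂²`. For the order-3 one, note that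
for `g = [[a, b], [c, d]] ∈ Γ₁(N)` both `b mod N` and `c/N mod N` are additive in `g`, because
`a ≡ d ≡ 1 mod N`; their difference sends `A` and `B` to `-1 ∈ ℤ/3`. On both generators the
product is therefore `(-1) · exp(-2πi/3) = exp(πi/3)`.
-/

namespace Matrix.SpecialLinearGroup

variable {n : Type*} [Fintype n] [DecidableEq n]

def signMod (m : ℕ) [NeZero m] : SpecialLinearGroup n ℤ →* ℤˣ :=
  Equiv.Perm.sign.comp <| (MulAction.toPermHom (SpecialLinearGroup n (ZMod m)) (n → ZMod m)).comp <|
    map (Int.castRingHom (ZMod m))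

end Matrix.SpecialLinearGroup

namespace CongruenceSubgroup

variable (N : ℕ)

theorem Gamma1.coe_mul_apply (g h : Gamma1 N) (i j : Fin 2) :
    ((g * h : Gamma1 N) : SpecialLinearGroup (Fin 2) ℤ) i j =
      g.1 i 0 * h.1 0 j + g.1 i 1 * h.1 1 j := by
  simp [Matrix.mul_apply, Fin.sum_univ_two]

theorem Gamma1.dvd_lowerLeft (g : Gamma1 N) : (N : ℤ) ∣ g.1 1 0 :=
  (ZMod.intCast_zmod_eq_zero_iff_dvd _ N).1 ((Gamma1_mem N g).1 g.2).2.2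

def Gamma1.upperRightHom : Gamma1 N →* Multiplicative (ZMod N) where
  toFun g := .ofAdd (g.1 0 1 : ZMod N)
  map_one' := by simp
  map_mul' g h := by
    obtain ⟨hg₀₀, -, -⟩ := (Gamma1_mem N g).1 g.2
    obtain ⟨-, hh₁₁, -⟩ := (Gamma1_mem N h).1 h.2
    rw [← ofAdd_add, Gamma1.coe_mul_apply]
    push_cast
    rw [hg₀₀, hh₁₁, one_mul, mul_one, add_comm]

def Gamma1.lowerLeftDivHom [NeZero N] : Gamma1 N →* Multiplicative (ZMod N) where
  toFun g := .ofAdd ((g.1 1 0 / N : ℤ) : ZMod N)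
  map_one' := by simp
  map_mul' g h := by
    obtain ⟨-, hg₁₁, -⟩ := (Gamma1_mem N g).1 g.2
    obtain ⟨hh₀₀, -, -⟩ := (Gamma1_mem N h).1 h.2
    obtain ⟨x, hx⟩ := Gamma1.dvd_lowerLeft N g
    obtain ⟨y, hy⟩ := Gamma1.dvd_lowerLeft N h
    have hN : (N : ℤ) ≠ 0 := by exact_mod_cast NeZero.ne N
    rw [← ofAdd_add, Gamma1.coe_mul_apply, hx, hy, mul_assoc, mul_left_comm _ (N : ℤ), ← mul_add]
    simp only [Int.mul_ediv_cancel_left _ hN]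
    push_cast
    rw [hg₁₁, hh₀₀, one_mul, mul_one]

end CongruenceSubgroup

open CongruenceSubgroup Complex

theorem neg_toCircle_neg_one_eq_exp_pi_mul_I_div_three :
    -(ZMod.toCircle ((-1 : ℤ) : ZMod 3) : ℂ) = exp (Real.pi * I / 3) := by
  calc -(ZMod.toCircle ((-1 : ℤ) : ZMod 3) : ℂ)
      = exp (Real.pi * I) * exp (2 * Real.pi * I * (-1 : ℤ) / (3 : ℕ)) := by
        rw [ZMod.toCircle_intCast, exp_pi_mul_I, neg_one_mul]
    _ = exp (Real.pi * I / 3) := by rw [← exp_add]; push_cast; ring_nf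

theorem exp_pi_mul_I_div_three_pow_three : exp (Real.pi * I / 3) ^ 3 = -1 := by
  rw [← exp_nat_mul, ← exp_pi_mul_I]; push_cast; ring_nf

def gamma1ThreeExponent : Gamma1 3 →* Multiplicative (ZMod 3) :=
  Gamma1.lowerLeftDivHom 3 / Gamma1.upperRightHom 3

noncomputable def gamma1ThreeCharacter : Gamma1 3 →* ℂˣ :=
  (Units.map (Int.castRingHom ℂ).toMonoidHom).comp
      ((SpecialLinearGroup.signMod 2).comp (Gamma1 3).subtype) *
    Circle.toUnits.comp (ZMod.toCircle.toMonoidHom.comp gamma1ThreeExponent)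

theorem gamma1ThreeCharacter_apply (g : Gamma1 3) :
    (gamma1ThreeCharacter g : ℂ) =
      (SpecialLinearGroup.signMod 2 g.1 : ℤ) * (ZMod.toCircle (gamma1ThreeExponent g).toAdd : ℂ) :=
  rfl

theorem gamma1ThreeCharacter_pow_six (g : Gamma1 3) : gamma1ThreeCharacter g ^ 6 = 1 := by
  have hσ (u : ℤˣ) : u ^ 6 = 1 := by
    rw [show 6 = 2 * 3 from rfl, pow_mul, Int.units_sq, one_pow]
  have hτ (x : Multiplicative (ZMod 3)) : x ^ 6 = 1 := by
    have hx : x ^ 3 = 1 := by simpa using pow_card_eq_one (x := x)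
    rw [show 6 = 3 * 2 from rfl, pow_mul, hx, one_pow]
  simp only [gamma1ThreeCharacter, MonoidHom.mul_apply, MonoidHom.comp_apply, mul_pow,
    ← map_pow, hσ, hτ, map_one, one_mul]

theorem gamma1ThreeCharacter_eq_exp_pi_mul_I_div_three (g : Gamma1 3)
    (hσ : SpecialLinearGroup.signMod 2 g.1 = -1)
    (hτ : gamma1ThreeExponent g = .ofAdd ((-1 : ℤ) : ZMod 3)) :
    (gamma1ThreeCharacter g : ℂ) = exp (Real.pi * I / 3) := by
  rw [gamma1ThreeCharacter_apply, hσ, hτ, toAdd_ofAdd,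
    ← neg_toCircle_neg_one_eq_exp_pi_mul_I_div_three]
  push_cast
  ring

/-- There is a character `ϑ : Γ₁(3) → ℂˣ` with `ϑ(A) = ϑ(B) = exp(πi/3)`;
`ϑ⁶` is trivial and `ϑ³` takes the value `-1` on both generators. -/
theorem exists_character_Gamma1_three :
    ∃ ϑ : (CongruenceSubgroup.Gamma1 3) →* ℂˣ,
      (ϑ ⟨A, A_mem_Gamma1_three⟩ : ℂ) = Complex.exp (Real.pi * Complex.I / 3) ∧
      (ϑ ⟨B, B_mem_Gamma1_three⟩ : ℂ) = Complex.exp (Real.pi * Complex.I / 3) ∧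
      (∀ g, (ϑ g) ^ 6 = 1) ∧
      ((ϑ ⟨A, A_mem_Gamma1_three⟩ : ℂ) ^ 3 = -1) ∧
      ((ϑ ⟨B, B_mem_Gamma1_three⟩ : ℂ) ^ 3 = -1) := by
  have hA := gamma1ThreeCharacter_eq_exp_pi_mul_I_div_three ⟨A, A_mem_Gamma1_three⟩
    (by decide) (by decide)
  have hB := gamma1ThreeCharacter_eq_exp_pi_mul_I_div_three ⟨B, B_mem_Gamma1_three⟩
    (by decide) (by decide)
  exact ⟨gamma1ThreeCharacter, hA, hB, gamma1ThreeCharacter_pow_six,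
    hA ▸ exp_pi_mul_I_div_three_pow_three, hB ▸ exp_pi_mul_I_div_three_pow_three⟩
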